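/- arXiv:2404.04290 — 4 statements merged into one kernel-verified Lean document; each statement's English description precedes it below -/
import Mathlib

section
/- If v_1,…,v_{J} are unit vectors in ℝ^M all lying in the ρ-neighborhood of a linear subspace Π of dimension J−1 (with 0 < ρ < 1), then the J-dimensional volume of the parallelepiped spanned by v_1,…,v_J is at most C·ρ for a constant C depending only on M and J. -/
open Module RealInnerProductSpace

/-! Choose points `p i ∈ P` with `‖v i - p i‖ ≤ ρ`. There are `J` of them in a space of dimension
`J - 1`, so `∑ g i • p i = 0` for coefficients normalized to `g k = 1` and `|g i| ≤ 1`.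
Replacing `v k` by `w = ∑ g i • v i` is a column operation of determinant `g k = 1`, so it does not
change the Gram determinant, and `w = ∑ g i • (v i - p i)` is short: `‖w‖ ≤ J ρ`. The Hadamard-type
bound `det (gram v) ≤ J! ∏ ‖v i‖ ^ 2` then gives `det (gram v) ≤ J! (J ρ) ^ 2`. -/

namespace Matrix

variable {ι E : Type*} [Fintype ι]

theorem gram_sum_smul {κ 𝕜 : Type*} [RCLike 𝕜] [SeminormedAddCommGroup E]
    [InnerProductSpace 𝕜 E] (S : Matrix ι κ 𝕜) (v : ι → E) :
    gram 𝕜 (fun j => ∑ i, S i j • v i) = Sᴴ * gram 𝕜 v * S := by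
  ext a b
  simp only [gram_apply, mul_apply, conjTranspose_apply, sum_inner, inner_sum, inner_smul_left,
    inner_smul_right, Finset.sum_mul, Finset.mul_sum, RCLike.star_def]
  refine Finset.sum_congr rfl fun i _ => Finset.sum_congr rfl fun l _ => ?_
  ring

variable [DecidableEq ι] [SeminormedAddCommGroup E] [InnerProductSpace ℝ E]

theorem det_gram_update_sum_smul (v : ι → E) (k : ι) (g : ι → ℝ) :
    (gram ℝ (Function.update v k (∑ i, g i • v i))).det = g k ^ 2 * (gram ℝ v).det := by
  set S : Matrix ι ι ℝ := (1 : Matrix ι ι ℝ).updateCol k g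
  have hS : S.det = g k := by simpa [one_apply] using det_updateCol_sum (1 : Matrix ι ι ℝ) k g
  have hv : Function.update v k (∑ i, g i • v i) = fun j => ∑ i, S i j • v i := by
    funext j
    rcases eq_or_ne j k with rfl | hj <;> simp [S, one_apply, *]
  rw [hv, gram_sum_smul, det_mul, det_mul, conjTranspose_eq_transpose_of_trivial, det_transpose,
    hS]
  ring

theorem det_gram_le_factorial_mul_prod_norm_sq (v : ι → E) :
    (gram ℝ v).det ≤ (Fintype.card ι).factorial * ∏ i, ‖v i‖ ^ 2 := by
  have hterm (σ : Equiv.Perm ι) :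
      |(Equiv.Perm.sign σ : ℝ) * ∏ i, gram ℝ v (σ i) i| ≤ ∏ i, ‖v i‖ ^ 2 :=
    calc |(Equiv.Perm.sign σ : ℝ) * ∏ i, gram ℝ v (σ i) i| = ∏ i, |⟪v (σ i), v i⟫| := by
          simp [abs_mul, Finset.abs_prod, ← Int.cast_abs]
      _ ≤ ∏ i, ‖v (σ i)‖ * ‖v i‖ :=
          Finset.prod_le_prod (fun _ _ => abs_nonneg _) fun _ _ => abs_real_inner_le_norm _ _
      _ = ∏ i, ‖v i‖ ^ 2 := by
          rw [Finset.prod_mul_distrib, Equiv.prod_comp σ fun i => ‖v i‖, Finset.prod_pow]; ring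
  calc (gram ℝ v).det ≤ |(gram ℝ v).det| := le_abs_self _
    _ ≤ ∑ σ : Equiv.Perm ι, |(Equiv.Perm.sign σ : ℝ) * ∏ i, gram ℝ v (σ i) i| := by
        rw [det_apply']
        exact Finset.abs_sum_le_sum_abs _ _
    _ ≤ ∑ _σ : Equiv.Perm ι, ∏ i, ‖v i‖ ^ 2 := Finset.sum_le_sum fun σ _ => hterm σ
    _ = (Fintype.card ι).factorial * ∏ i, ‖v i‖ ^ 2 := by simp [Fintype.card_perm]

end Matrix

theorem exists_normalized_sum_smul_eq_zero {K V ι : Type*} [Field K] [LinearOrder K]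
    [IsStrictOrderedRing K] [AddCommGroup V] [Module K V] [Fintype ι] {p : ι → V}
    (h : ¬LinearIndependent K p) :
    ∃ (g : ι → K) (k : ι), g k = 1 ∧ (∀ i, |g i| ≤ 1) ∧ ∑ i, g i • p i = 0 := by
  obtain ⟨c, hc, i₀, hci₀⟩ := Fintype.not_linearIndependent_iff.mp h
  have : Nonempty ι := ⟨i₀⟩
  obtain ⟨k, hk⟩ := Finite.exists_max fun i => |c i|
  have hck : 0 < |c k| := (abs_pos.mpr hci₀).trans_le (hk i₀)
  refine ⟨fun i => c i / c k, k, div_self (abs_pos.mp hck), fun i => ?_, ?_⟩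
  · rw [abs_div]
    exact div_le_one_of_le₀ (hk i) hck.le
  · simp only [div_eq_inv_mul, mul_smul, ← Finset.smul_sum, hc, smul_zero]

theorem det_gram_le_of_forall_exists_mem_norm_sub_le {E ι : Type*} [NormedAddCommGroup E]
    [InnerProductSpace ℝ E] [Fintype ι] [DecidableEq ι] (P : Submodule ℝ E)
    [FiniteDimensional ℝ P] (hP : finrank ℝ P < Fintype.card ι) {v : ι → E}
    (hv : ∀ i, ‖v i‖ ≤ 1) {ρ : ℝ} (hρ : ∀ i, ∃ p ∈ P, ‖v i - p‖ ≤ ρ) :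
    (Matrix.gram ℝ v).det ≤ (Fintype.card ι).factorial * (Fintype.card ι * ρ) ^ 2 := by
  choose p hpP hvp using hρ
  have hdep : ¬LinearIndependent ℝ fun i => (⟨p i, hpP i⟩ : P) := fun hli =>
    hP.not_ge hli.fintype_card_le_finrank
  obtain ⟨g, k, hgk, hg, hgp⟩ := exists_normalized_sum_smul_eq_zero hdep
  replace hgp : ∑ i, g i • p i = 0 := by simpa using congrArg Subtype.val hgp
  set w := ∑ i, g i • v i
  have hw : ‖w‖ ≤ Fintype.card ι * ρ :=
    calc ‖w‖ = ‖∑ i, g i • (v i - p i)‖ := by simp [w, smul_sub, hgp]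
      _ ≤ ∑ i, ‖g i • (v i - p i)‖ := norm_sum_le _ _
      _ ≤ ∑ _i : ι, ρ := Finset.sum_le_sum fun i _ => by
          rw [norm_smul, Real.norm_eq_abs]
          exact (mul_le_of_le_one_left (norm_nonneg _) (hg i)).trans (hvp i)
      _ = Fintype.card ι * ρ := by simp
  have hprod : ∏ i, ‖Function.update v k w i‖ ^ 2 ≤ (Fintype.card ι * ρ) ^ 2 := by
    rw [← Finset.mul_prod_erase _ _ (Finset.mem_univ k), Function.update_self]
    have hrest : ∏ i ∈ Finset.univ.erase k, ‖Function.update v k w i‖ ^ 2 ≤ 1 :=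
      Finset.prod_le_one (fun _ _ => by positivity) fun i hi => by
        rw [Function.update_of_ne (Finset.ne_of_mem_erase hi)]
        exact pow_le_one₀ (norm_nonneg _) (hv i)
    exact (mul_le_of_le_one_right (by positivity) hrest).trans
      (pow_le_pow_left₀ (norm_nonneg _) hw 2)
  calc (Matrix.gram ℝ v).det = (Matrix.gram ℝ (Function.update v k w)).det := by
        rw [Matrix.det_gram_update_sum_smul, hgk, one_pow, one_mul]
    _ ≤ (Fintype.card ι).factorial * ∏ i, ‖Function.update v k w i‖ ^ 2 :=
        Matrix.det_gram_le_factorial_mul_prod_norm_sq _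
    _ ≤ (Fintype.card ι).factorial * (Fintype.card ι * ρ) ^ 2 := by gcongr

theorem stmt_5 (M J : ℕ) (hJ : 1 ≤ J) :
    ∃ C : ℝ, 0 < C ∧
      ∀ (ρ : ℝ), 0 < ρ → ρ < 1 →
        ∀ (P : Submodule ℝ (EuclideanSpace ℝ (Fin M))), finrank ℝ P = J - 1 →
          ∀ v : Fin J → EuclideanSpace ℝ (Fin M),
            (∀ i, ‖v i‖ = 1) →
            (∀ i, Metric.infDist (v i) (P : Set (EuclideanSpace ℝ (Fin M))) ≤ ρ) →
            Real.sqrt (Matrix.det (Matrix.of fun i j : Fin J => ⟪v i, v j⟫)) ≤ C * ρ := by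
  refine ⟨J * √(J.factorial : ℝ), by positivity, ?_⟩
  intro ρ hρ _ P hP v hv hd
  have hnear (i : Fin J) : ∃ p ∈ P, ‖v i - p‖ ≤ ρ := by
    obtain ⟨p, hp, hdist⟩ :=
      P.closed_of_finiteDimensional.exists_infDist_eq_dist ⟨0, P.zero_mem⟩ (v i)
    exact ⟨p, hp, by rw [← dist_eq_norm, ← hdist]; exact hd i⟩
  have hdet := det_gram_le_of_forall_exists_mem_norm_sub_le P
    (by simp only [hP, Fintype.card_fin]; omega) (fun i => (hv i).le) hnear
  rw [Fintype.card_fin] at hdet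
  calc √(Matrix.gram ℝ v).det ≤ √(J.factorial * (J * ρ) ^ 2) := Real.sqrt_le_sqrt hdet
    _ = J * √(J.factorial : ℝ) * ρ := by
      rw [Real.sqrt_mul (by positivity), Real.sqrt_sq (by positivity)]
      ring
end

section
/- Let A ⊆ [0,1]^m be a finite set, 0 < δ ≤ 1, M ≥ 1, and s ≥ 0 real numbers. Suppose that for every ball Q_r ⊆ [0,1]^m of radius r with δ ≤ r ≤ 1, one has #(A ∩ Q_r) ≤ M·(r/δ)^s. Then A can be partitioned into at most C·M^{C} subsets (C depending only on m and s) such that each subset A' satisfies #(A' ∩ Q_r) ≤ (r/δ)^s for every ball Q_r of radius r ∈ [δ,1]. -/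
/-!
Colour every point of `A` by a pair. The first coordinate comes from a greedy colouring in which
points of equal colour are more than `2τ` apart, where `τ = ρδ` and `ρ ^ s = 4 · 3 ^ m`: it needs
`≲ M` colours, since a ball of radius `2τ` contains `≲ M` points, and a ball of radius `r ≤ τ`
meets each of its classes at most once. The second coordinate is the rank of the point, modulo
some `N ≈ M`, in an ordering of `A` for which every dyadic cube is an interval. A ball of radius
`r > τ` meets at most `3 ^ m` dyadic cubes of side about `r`; each holds `≲ M (r/δ)^s` points,
hence at most `(r/δ)^s / (2 · 3 ^ m) + 2` of a given residue class, and the total is at most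
`(r/δ)^s` because `(r/δ)^s ≥ ρ ^ s = 4 · 3 ^ m`. The `≲ M²` colour classes are the partition.
-/

open Finset Metric
open scoped Classical

variable {α : Type*}

theorem Finset.ncard_coe_inter (A : Finset α) (s : Set α) :
    ((A : Set α) ∩ s).ncard = #{x ∈ A | x ∈ s} := by
  rw [← Set.ncard_coe_finset, coe_filter]
  rfl

theorem Finset.card_le_card_image_mul {β : Type*} [DecidableEq β] {s : Finset α} (f : α → β)
    {K : ℝ} (h : ∀ b ∈ s.image f, (#{x ∈ s | f x = b} : ℝ) ≤ K) : (#s : ℝ) ≤ #(s.image f) * K := by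
  rw [card_eq_sum_card_image f s, Nat.cast_sum]
  simpa using sum_le_card_nsmul _ _ _ h

theorem exists_partition_of_coloring {ι : Type*} [DecidableEq α] [DecidableEq ι] (A : Finset α)
    (I : Finset ι) (χ : α → ι) (hχ : ∀ x ∈ A, χ x ∈ I) :
    ∃ P : Finset (Finset α), #P ≤ #I ∧ (∀ B ∈ P, B ⊆ A) ∧ (∀ x ∈ A, ∃! B, B ∈ P ∧ x ∈ B) ∧
      ∀ B ∈ P, ∃ i, B = {x ∈ A | χ x = i} := by
  refine ⟨I.image fun i => {x ∈ A | χ x = i}, card_image_le, ?_, fun x hx => ?_, ?_⟩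
  · rintro _ hB
    obtain ⟨i, -, rfl⟩ := mem_image.1 hB
    exact filter_subset _ _
  · refine ⟨{y ∈ A | χ y = χ x}, ⟨mem_image.2 ⟨χ x, hχ x hx, rfl⟩, mem_filter.2 ⟨hx, rfl⟩⟩, ?_⟩
    rintro _ ⟨hB, hxB⟩
    obtain ⟨i, -, rfl⟩ := mem_image.1 hB
    rw [(mem_filter.1 hxB).2]
  · rintro _ hB
    obtain ⟨i, -, rfl⟩ := mem_image.1 hB
    exact ⟨i, rfl⟩

theorem exists_greedy_coloring (A : Finset α) (R : α → α → Prop) (hR : ∀ x y, R x y → R y x)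
    {N : ℕ} (hN : ∀ x ∈ A, #{y ∈ A.erase x | R x y} < N) :
    ∃ χ : α → ℕ, (∀ x ∈ A, χ x < N) ∧ ∀ x ∈ A, ∀ y ∈ A, x ≠ y → R x y → χ x ≠ χ y := by
  suffices ∀ B ⊆ A, ∃ χ : α → ℕ, (∀ x ∈ B, χ x < N) ∧
      ∀ x ∈ B, ∀ y ∈ B, x ≠ y → R x y → χ x ≠ χ y from this A subset_rfl
  intro B
  induction B using Finset.induction_on with
  | empty => exact fun _ => ⟨fun _ => 0, by simp, by simp⟩
  | insert x B hxB ih =>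
    intro hB
    obtain ⟨χ, hχN, hχR⟩ := ih ((subset_insert x B).trans hB)
    have hne : ∀ y ∈ B, y ≠ x := fun y hy => ne_of_mem_of_not_mem hy hxB
    obtain ⟨c, hcN, hc⟩ : ∃ c ∈ range N, c ∉ {y ∈ B | R x y}.image χ := by
      refine exists_mem_notMem_of_card_lt_card ?_
      calc #({y ∈ B | R x y}.image χ) ≤ #{y ∈ B | R x y} := card_image_le
        _ ≤ #{y ∈ A.erase x | R x y} := card_le_card <| filter_subset_filter _
            fun y hy => mem_erase.2 ⟨hne y hy, hB (mem_insert_of_mem hy)⟩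
        _ < #(range N) := (card_range N).symm ▸ hN x (hB (mem_insert_self x B))
    have hfree : ∀ y ∈ B, R x y → c ≠ χ y := fun y hy hxy h =>
      hc (mem_image.2 ⟨y, mem_filter.2 ⟨hy, hxy⟩, h.symm⟩)
    refine ⟨Function.update χ x c, fun y hy => ?_, fun y hy z hz hyz hyzR => ?_⟩
    · rcases mem_insert.1 hy with rfl | hy
      · simpa using hcN
      · simpa [hne y hy] using hχN y hy
    · rcases mem_insert.1 hy with rfl | hyB <;> rcases mem_insert.1 hz with rfl | hzB
      · exact absurd rfl hyz
      · simpa [hne z hzB] using hfree z hzB hyzR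
      · simpa [hne y hyB] using (hfree y hyB (hR _ _ hyzR)).symm
      · simpa [hne y hyB, hne z hzB] using hχR y hyB z hzB hyz hyzR

theorem card_filter_closedBall_le_one {E : Type*} [PseudoMetricSpace E] {B : Finset E} {r : ℝ}
    (hB : ∀ x ∈ B, ∀ y ∈ B, x ≠ y → 2 * r < dist x y) (c : E) :
    #{x ∈ B | x ∈ closedBall c r} ≤ 1 := by
  refine card_le_one.2 fun x hx y hy => ?_
  simp only [mem_filter, mem_closedBall] at hx hy
  by_contra hxy
  linarith [hB x hx.1 y hy.1 hxy, dist_triangle_right x y c]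

theorem exists_coloring_card_filter_closedBall_le_one {E : Type*} [PseudoMetricSpace E]
    (A : Finset E) {τ : ℝ} (hτ : 0 ≤ τ) {N : ℕ}
    (hN : ∀ x ∈ A, #{y ∈ A | y ∈ closedBall x (2 * τ)} ≤ N) :
    ∃ χ : E → ℕ, (∀ x ∈ A, χ x < N) ∧
      ∀ k c, ∀ r ≤ τ, #{x ∈ {x ∈ A | χ x = k} | x ∈ closedBall c r} ≤ 1 := by
  have hdeg : ∀ x ∈ A, #{y ∈ A.erase x | dist x y ≤ 2 * τ} < N := fun x hx => by
    refine lt_of_lt_of_le (card_lt_card ((ssubset_iff_of_subset fun y hy => ?_).2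
      ⟨x, mem_filter.2 ⟨hx, mem_closedBall_self (by linarith)⟩, fun h => ?_⟩)) (hN x hx)
    · obtain ⟨hy, hd⟩ := mem_filter.1 hy
      exact mem_filter.2 ⟨mem_of_mem_erase hy, mem_closedBall'.2 hd⟩
    · exact notMem_erase x A (mem_filter.1 h).1
  obtain ⟨χ, hχN, hχ⟩ := exists_greedy_coloring A (fun x y => dist x y ≤ 2 * τ)
    (fun x y h => (dist_comm y x).trans_le h) hdeg
  refine ⟨χ, hχN, fun k c r hr => card_filter_closedBall_le_one (fun x hx y hy hxy => ?_) c⟩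
  rw [mem_filter] at hx hy
  by_contra! hd
  exact hχ x hx.1 y hy.1 hxy (by linarith) (hx.2.trans hy.2.symm)

theorem Pi.Lex.eq_below_of_le_of_le {ι : Type*} {β : ι → Type*} [LinearOrder ι]
    [WellFoundedLT ι] [∀ i, LinearOrder (β i)] {a b z : ∀ i, β i} {n : ι} (hab : ∀ k < n, a k = b k)
    (haz : toLex a ≤ toLex z) (hzb : toLex z ≤ toLex b) : ∀ k < n, z k = a k := by
  by_contra! h
  obtain ⟨k₀, ⟨hk₀n, hk₀⟩, hmin⟩ := wellFounded_lt.has_min {k | k < n ∧ z k ≠ a k} h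
  have below : ∀ k < k₀, z k = a k := fun k hk =>
    not_not.1 fun hne => hmin k ⟨hk.trans hk₀n, hne⟩ hk
  rcases hk₀.lt_or_gt with hlt | hgt
  · exact haz.not_gt ⟨k₀, below, hlt⟩
  · exact hzb.not_gt ⟨k₀, fun k hk => (hab k (hk.trans hk₀n)).symm.trans (below k hk).symm,
      (hab k₀ hk₀n ▸ hgt : b k₀ < z k₀)⟩

section Rank

variable {β : Type*} [LinearOrder β]

def rankIn (A : Finset α) (F : α → β) (x : α) : ℕ := #{y ∈ A | F y < F x}

def IsIntervalIn (A : Finset α) (F : α → β) (S : Finset α) : Prop :=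
  ∀ x ∈ S, ∀ y ∈ S, ∀ z ∈ A, F x ≤ F z → F z ≤ F y → z ∈ S

variable {A : Finset α} {F : α → β}

theorem rankIn_le_rankIn {x y : α} (h : F x ≤ F y) : rankIn A F x ≤ rankIn A F y :=
  card_le_card <| monotone_filter_right A fun _ _ hz => hz.trans_le h

theorem rankIn_lt_rankIn {x y : α} (hx : x ∈ A) (h : F x < F y) : rankIn A F x < rankIn A F y :=
  card_lt_card <| (ssubset_iff_of_subset
    (monotone_filter_right A fun _ _ hz => hz.trans h)).2
    ⟨x, mem_filter.2 ⟨hx, h⟩, fun hx' => (mem_filter.1 hx').2.false⟩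

theorem rankIn_injOn (hF : Set.InjOn F A) : Set.InjOn (rankIn A F) A := by
  intro x hx y hy hxy
  by_contra hne
  rcases lt_or_gt_of_ne (hF.ne hx hy hne) with h | h
  · exact (rankIn_lt_rankIn hx h).ne hxy
  · exact (rankIn_lt_rankIn hy h).ne' hxy

theorem rankIn_lt_add_card {S : Finset α} (hS : IsIntervalIn A F S) {x₀ x : α} (hx₀ : x₀ ∈ S)
    (hx : x ∈ S) : rankIn A F x < rankIn A F x₀ + #S := by
  have hsub : {y ∈ A | F y < F x} ⊆ {y ∈ A | F y < F x₀} ∪ S.erase x := by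
    intro y hy
    rw [mem_filter] at hy
    rcases lt_or_ge (F y) (F x₀) with h | h
    · exact mem_union_left _ (mem_filter.2 ⟨hy.1, h⟩)
    · exact mem_union_right _ (mem_erase.2 ⟨by rintro rfl; exact hy.2.false,
        hS x₀ hx₀ x hx y hy.1 h hy.2.le⟩)
  calc rankIn A F x ≤ #({y ∈ A | F y < F x₀} ∪ S.erase x) := card_le_card hsub
    _ ≤ rankIn A F x₀ + #(S.erase x) := card_union_le _ _
    _ < rankIn A F x₀ + #S := by
      rw [card_erase_of_mem hx]
      have := card_pos.2 ⟨x, hx⟩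
      omega

theorem card_filter_rankIn_mod_le (hF : Set.InjOn F A) {S : Finset α} (hSA : S ⊆ A)
    (hS : IsIntervalIn A F S) (N t : ℕ) : #{x ∈ S | rankIn A F x % N = t} ≤ #S / N + 2 := by
  obtain rfl | hne := S.eq_empty_or_nonempty
  · simp
  obtain ⟨x₀, hx₀, hmin⟩ := S.exists_min_image F hne
  set a := rankIn A F x₀
  have hmaps : ∀ x ∈ {x ∈ S | rankIn A F x % N = t},
      rankIn A F x / N ∈ Icc (a / N) ((a + #S) / N) := fun x hx =>
    have hxS := (mem_filter.1 hx).1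
    mem_Icc.2 ⟨Nat.div_le_div_right (rankIn_le_rankIn (hmin x hxS)),
      Nat.div_le_div_right (rankIn_lt_add_card hS hx₀ hxS).le⟩
  have hinj : Set.InjOn (fun x => rankIn A F x / N)
      ({x ∈ S | rankIn A F x % N = t} : Finset α) := by
    intro x hx y hy hxy
    rw [mem_coe, mem_filter] at hx hy
    simp only at hxy
    refine rankIn_injOn hF (hSA hx.1) (hSA hy.1) ?_
    rw [← Nat.div_add_mod (rankIn A F x) N, ← Nat.div_add_mod (rankIn A F y) N, hx.2, hy.2, hxy]
  calc #{x ∈ S | rankIn A F x % N = t} ≤ #(Icc (a / N) ((a + #S) / N)) :=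
        card_le_card_of_injOn _ hmaps hinj
    _ = (a + #S) / N + 1 - a / N := Nat.card_Icc _ _
    _ ≤ #S / N + 2 := by
      have := Nat.add_div_le_div_add_div_add_one a #S N
      have := Nat.div_le_div_right (c := N) (Nat.le_add_right a #S)
      omega

end Rank

section Grid

variable {ι : Type*}

noncomputable def gridIndex (q : ℝ) (x : EuclideanSpace ℝ ι) : ι → ℤ := fun i => ⌊q * x i⌋

/-- Every dyadic cube is an interval for this order (`gridIndex_eq_of_dyadicKey_le_le`). -/
noncomputable def dyadicKey (x : EuclideanSpace ℝ ι) : Lex (ℕ → Lex (ι → ℤ)) :=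
  toLex fun j => toLex (gridIndex (2 ^ j) x)

theorem gridIndex_two_pow_eq_of_le {x y : EuclideanSpace ℝ ι} {j j' : ℕ} (hj : j' ≤ j)
    (h : gridIndex (2 ^ j) x = gridIndex (2 ^ j) y) :
    gridIndex (2 ^ j') x = gridIndex (2 ^ j') y := by
  have coarsen : ∀ u : ℝ, ⌊2 ^ j' * u⌋ = ⌊2 ^ j * u⌋ / (2 ^ (j - j') : ℕ) := fun u => by
    rw [← Int.floor_div_natCast, ← pow_sub_mul_pow (2 : ℝ) hj]
    push_cast
    field_simp
  funext i
  have hi : ⌊2 ^ j * x i⌋ = ⌊2 ^ j * y i⌋ := congrFun h i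
  simp only [gridIndex, coarsen, hi]

variable [Fintype ι]

theorem EuclideanSpace.dist_le_sqrt_card_mul {x y : EuclideanSpace ℝ ι} {b : ℝ} (hb : 0 ≤ b)
    (h : ∀ i, |x i - y i| ≤ b) : dist x y ≤ √(Fintype.card ι) * b := by
  rw [EuclideanSpace.dist_eq, ← Real.sqrt_sq hb, ← Real.sqrt_mul (Nat.cast_nonneg _)]
  refine Real.sqrt_le_sqrt ?_
  calc ∑ i, dist (x i) (y i) ^ 2 ≤ ∑ _i : ι, b ^ 2 :=
        sum_le_sum fun i _ => pow_le_pow_left₀ dist_nonneg ((Real.dist_eq _ _).trans_le (h i)) 2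
    _ = Fintype.card ι * b ^ 2 := by simp

theorem dist_le_of_gridIndex_eq {q : ℝ} (hq : 0 < q) {x y : EuclideanSpace ℝ ι}
    (h : gridIndex q x = gridIndex q y) : dist x y ≤ √(Fintype.card ι) / q := by
  rw [div_eq_mul_one_div]
  refine EuclideanSpace.dist_le_sqrt_card_mul (by positivity) fun i => ?_
  have := Int.abs_sub_lt_one_of_floor_eq_floor (congrFun h i)
  rw [← mul_sub, abs_mul, abs_of_pos hq] at this
  rw [le_div_iff₀ hq]
  linarith

theorem filter_gridIndex_eq_subset (A : Finset (EuclideanSpace ℝ ι)) {q R : ℝ} (hq : 0 < q)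
    (hR : √(Fintype.card ι) / q ≤ R) (x₀ : EuclideanSpace ℝ ι) :
    {x ∈ A | gridIndex q x = gridIndex q x₀} ⊆ {x ∈ A | x ∈ closedBall x₀ R} :=
  monotone_filter_right A fun _ _ hx => mem_closedBall.2 ((dist_le_of_gridIndex_eq hq hx).trans hR)

theorem card_image_gridIndex_le {s : Finset (EuclideanSpace ℝ ι)} {q w : ℝ} {n : ℕ} (a : ι → ℝ)
    (hq : 0 ≤ q) (hn : q * w ≤ n) (hs : ∀ x ∈ s, ∀ i, x i ∈ Set.Icc (a i) (a i + w)) :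
    #(s.image (gridIndex q)) ≤ (n + 1) ^ Fintype.card ι := by
  have hsub : s.image (gridIndex q) ⊆
      Fintype.piFinset fun i => Icc ⌊q * a i⌋ (⌊q * a i⌋ + n) := by
    simp only [subset_iff, mem_image, Fintype.mem_piFinset, mem_Icc]
    rintro _ ⟨x, hx, rfl⟩ i
    obtain ⟨h1, h2⟩ := hs x hx i
    refine ⟨Int.floor_le_floor (mul_le_mul_of_nonneg_left h1 hq), ?_⟩
    rw [← Int.floor_add_natCast]
    exact Int.floor_le_floor (by nlinarith)
  calc #(s.image (gridIndex q)) ≤ _ := card_le_card hsub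
    _ = (n + 1) ^ Fintype.card ι := by
      simp only [Fintype.card_piFinset, Int.card_Icc, add_assoc, add_sub_cancel_left]
      norm_cast
      simp

theorem dyadicKey_injective : Function.Injective (dyadicKey (ι := ι)) := by
  intro x y h
  refine eq_of_forall_dist_le fun ε hε => ?_
  obtain ⟨j, hj⟩ := pow_unbounded_of_one_lt (√(Fintype.card ι) / ε) one_lt_two
  have hgrid : gridIndex (2 ^ j) x = gridIndex (2 ^ j) y := congrFun (congrArg ofLex h) j
  calc dist x y ≤ √(Fintype.card ι) / 2 ^ j := dist_le_of_gridIndex_eq (by positivity) hgrid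
    _ ≤ ε := by
      rw [div_lt_iff₀ hε] at hj
      rw [div_le_iff₀ (by positivity)]
      linarith

theorem gridIndex_eq_of_dyadicKey_le_le [LinearOrder ι] {x y z : EuclideanSpace ℝ ι} {j : ℕ}
    (hxy : gridIndex (2 ^ j) x = gridIndex (2 ^ j) y) (hxz : dyadicKey x ≤ dyadicKey z)
    (hzy : dyadicKey z ≤ dyadicKey y) : gridIndex (2 ^ j) z = gridIndex (2 ^ j) x :=
  congrArg ofLex <| Pi.Lex.eq_below_of_le_of_le
    (fun _ hk => congrArg toLex (gridIndex_two_pow_eq_of_le (Nat.lt_succ_iff.1 hk) hxy)) hxz hzy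
    j j.lt_succ_self

end Grid

theorem floor_mul_mul_ceil_mul_le {a b M : ℝ} (ha : 0 ≤ a) (hb : 0 ≤ b) (hM : 1 ≤ M) :
    (⌊a * M⌋₊ * ⌈b * M⌉₊ : ℝ) ≤ (a * (b + 1) + 2) * M ^ (a * (b + 1) + 2) := by
  have h1 : (⌊a * M⌋₊ : ℝ) ≤ a * M := Nat.floor_le (by positivity)
  have h2 : (⌈b * M⌉₊ : ℝ) ≤ (b + 1) * M := by
    linarith [Nat.ceil_lt_add_one (by positivity : 0 ≤ b * M)]
  have h3 : M ^ (2 : ℝ) ≤ M ^ (a * (b + 1) + 2) :=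
    Real.rpow_le_rpow_of_exponent_le hM (by nlinarith)
  rw [Real.rpow_two] at h3
  calc (⌊a * M⌋₊ * ⌈b * M⌉₊ : ℝ) ≤ a * M * ((b + 1) * M) := by gcongr
    _ = a * (b + 1) * M ^ 2 := by ring
    _ ≤ (a * (b + 1) + 2) * M ^ (a * (b + 1) + 2) := by
      gcongr
      linarith

section KatzTao

variable {ι : Type*} [Fintype ι] {δ s M : ℝ} {A : Finset (EuclideanSpace ℝ ι)}

def IsKatzTaoSet (δ s M : ℝ) (A : Finset (EuclideanSpace ℝ ι)) : Prop :=
  ∀ c r, δ ≤ r → r ≤ 1 → (#{x ∈ A | x ∈ closedBall c r} : ℝ) ≤ M * (r / δ) ^ s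

theorem IsKatzTaoSet.card_le (hA : IsKatzTaoSet δ s M A) (hδ1 : δ ≤ 1)
    (hcube : ∀ x ∈ A, ∀ i, x i ∈ Set.Icc (0 : ℝ) 1) :
    (#A : ℝ) ≤ (Fintype.card ι + 2) ^ Fintype.card ι * (M * (1 / δ) ^ s) := by
  set n := Fintype.card ι
  have hq : (0 : ℝ) < n + 1 := by positivity
  have hcell : √n / (n + 1) ≤ 1 := by
    rw [div_le_one hq, Real.sqrt_le_iff]
    constructor <;> nlinarith
  have hfib : ∀ v ∈ A.image (gridIndex (n + 1)),
      (#{x ∈ A | gridIndex (n + 1) x = v} : ℝ) ≤ M * (1 / δ) ^ s := by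
    intro v hv
    obtain ⟨x₀, -, rfl⟩ := mem_image.1 hv
    exact le_trans (by exact_mod_cast card_le_card (filter_gridIndex_eq_subset A hq hcell x₀))
      (hA x₀ 1 hδ1 le_rfl)
  have hcells : #(A.image (gridIndex (n + 1))) ≤ (n + 1 + 1) ^ n :=
    card_image_gridIndex_le (n := n + 1) (w := 1) 0 hq.le (by push_cast; linarith)
      fun x hx i => by simpa using hcube x hx i
  calc (#A : ℝ) ≤ #(A.image (gridIndex (n + 1))) * (M * (1 / δ) ^ s) :=
        card_le_card_image_mul _ hfib
    _ ≤ (n + 2) ^ n * (M * (1 / δ) ^ s) := by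
      refine mul_le_mul_of_nonneg_right ?_ ((Nat.cast_nonneg _).trans (hA 0 1 hδ1 le_rfl))
      exact_mod_cast hcells

theorem IsKatzTaoSet.card_filter_closedBall_le (hA : IsKatzTaoSet δ s M A) (hδ : 0 < δ)
    (hδ1 : δ ≤ 1) (hM : 0 ≤ M) (hs : 0 ≤ s) (hcube : ∀ x ∈ A, ∀ i, x i ∈ Set.Icc (0 : ℝ) 1)
    (c : EuclideanSpace ℝ ι) {R : ℝ} (hR : δ ≤ R) :
    (#{x ∈ A | x ∈ closedBall c R} : ℝ) ≤
      (Fintype.card ι + 2) ^ Fintype.card ι * M * (R / δ) ^ s := by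
  have hG : (1 : ℝ) ≤ (Fintype.card ι + 2) ^ Fintype.card ι := one_le_pow₀ (by linarith)
  rw [mul_assoc]
  rcases le_or_gt R 1 with hR1 | hR1
  · exact (hA c R hR hR1).trans <| le_mul_of_one_le_left
      (mul_nonneg hM (Real.rpow_nonneg (div_nonneg (hδ.le.trans hR) hδ.le) _)) hG
  · calc (#{x ∈ A | x ∈ closedBall c R} : ℝ) ≤ #A := by exact_mod_cast card_filter_le _ _
      _ ≤ _ := hA.card_le hδ1 hcube
      _ ≤ _ := by gcongr

theorem IsKatzTaoSet.card_filter_rankIn_mod_filter_gridIndex_le [LinearOrder ι]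
    (hA : IsKatzTaoSet δ s M A) (hδ : 0 < δ) (hδ1 : δ ≤ 1) (hM : 0 ≤ M) (hs : 0 ≤ s)
    (hcube : ∀ x ∈ A, ∀ i, x i ∈ Set.Icc (0 : ℝ) 1) (N t j : ℕ) (x₀ : EuclideanSpace ℝ ι)
    {R : ℝ} (hjR : √(Fintype.card ι) / 2 ^ j ≤ R) (hR : δ ≤ R) :
    (#{x ∈ {x ∈ A | gridIndex (2 ^ j) x = gridIndex (2 ^ j) x₀} |
        rankIn A dyadicKey x % N = t} : ℝ) ≤
      (Fintype.card ι + 2) ^ Fintype.card ι * M * (R / δ) ^ s / N + 2 := by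
  set S := {x ∈ A | gridIndex (2 ^ j) x = gridIndex (2 ^ j) x₀}
  have hSint : IsIntervalIn A dyadicKey S := fun x hx y hy z hz hxz hzy =>
    mem_filter.2 ⟨hz, (gridIndex_eq_of_dyadicKey_le_le
      ((mem_filter.1 hx).2.trans (mem_filter.1 hy).2.symm) hxz hzy).trans (mem_filter.1 hx).2⟩
  have hS : (#S : ℝ) ≤ (Fintype.card ι + 2) ^ Fintype.card ι * M * (R / δ) ^ s :=
    (Nat.cast_le.2 (card_le_card (filter_gridIndex_eq_subset A (by positivity) hjR x₀))).trans
      (hA.card_filter_closedBall_le hδ hδ1 hM hs hcube x₀ hR)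
  calc (#{x ∈ S | rankIn A dyadicKey x % N = t} : ℝ) ≤ (#S / N : ℕ) + 2 := by
        exact_mod_cast card_filter_rankIn_mod_le (S := S) dyadicKey_injective.injOn
          (filter_subset _ A) hSint N t
    _ ≤ #S / N + 2 := by gcongr; exact Nat.cast_div_le
    _ ≤ _ := by gcongr

theorem IsKatzTaoSet.card_filter_rankIn_mod_filter_closedBall_le [LinearOrder ι]
    (hA : IsKatzTaoSet δ s M A) (hδ : 0 < δ) (hδ1 : δ ≤ 1) (hM : 0 ≤ M) (hs : 0 ≤ s)
    (hcube : ∀ x ∈ A, ∀ i, x i ∈ Set.Icc (0 : ℝ) 1) (N t : ℕ) (c : EuclideanSpace ℝ ι) {r : ℝ}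
    (hr : δ ≤ r) (hr1 : r ≤ 1) :
    (#{x ∈ {x ∈ A | rankIn A dyadicKey x % N = t} | x ∈ closedBall c r} : ℝ) ≤
      3 ^ Fintype.card ι * ((Fintype.card ι + 2) ^ Fintype.card ι *
        (2 * √(Fintype.card ι) + 1) ^ s * M * (r / δ) ^ s / N + 2) := by
  set n := Fintype.card ι
  set T := {x ∈ {x ∈ A | rankIn A dyadicKey x % N = t} | x ∈ closedBall c r}
  have hr0 : 0 < r := hδ.trans_le hr
  -- Dyadic cubes of side `2⁻ʲ ∈ [r, 2r)`: the ball meets at most `3 ^ n` of them.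
  obtain ⟨j, hj, hj'⟩ := exists_nat_pow_near (one_le_one_div hr0 hr1) one_lt_two
  have hq : (0 : ℝ) < 2 ^ j := by positivity
  rw [le_div_iff₀ hr0] at hj
  rw [div_lt_iff₀ hr0, pow_succ] at hj'
  have hcells : #(T.image (gridIndex (2 ^ j))) ≤ 3 ^ n := by
    refine card_image_gridIndex_le (n := 2) (w := 2 * r) (fun i => c i - r) hq.le
      (by push_cast; linarith) fun x hx i => ?_
    have := (PiLp.dist_apply_le x c i).trans (mem_closedBall.1 (mem_filter.1 hx).2)
    rw [Real.dist_eq, abs_le] at this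
    constructor <;> linarith
  have hcell : √n / 2 ^ j ≤ (2 * √n + 1) * r := by
    rw [div_le_iff₀ hq]
    nlinarith [Real.sqrt_nonneg n]
  have hfib : ∀ v ∈ T.image (gridIndex (2 ^ j)), (#{x ∈ T | gridIndex (2 ^ j) x = v} : ℝ) ≤
      (n + 2) ^ n * (2 * √n + 1) ^ s * M * (r / δ) ^ s / N + 2 := by
    intro v hv
    obtain ⟨x₀, -, rfl⟩ := mem_image.1 hv
    have hTS : {x ∈ T | gridIndex (2 ^ j) x = gridIndex (2 ^ j) x₀} ⊆
        {x ∈ {x ∈ A | gridIndex (2 ^ j) x = gridIndex (2 ^ j) x₀} |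
          rankIn A dyadicKey x % N = t} := by
      intro x hx
      simp only [T, mem_filter] at hx ⊢
      tauto
    calc (#{x ∈ T | gridIndex (2 ^ j) x = gridIndex (2 ^ j) x₀} : ℝ)
        ≤ (n + 2) ^ n * M * ((2 * √n + 1) * r / δ) ^ s / N + 2 :=
          (Nat.cast_le.2 (card_le_card hTS)).trans <|
            hA.card_filter_rankIn_mod_filter_gridIndex_le hδ hδ1 hM hs hcube N t j x₀ hcell
              (hr.trans (le_mul_of_one_le_left hr0.le (by linarith [Real.sqrt_nonneg n])))
      _ = _ := by
        rw [mul_div_assoc (2 * √n + 1), Real.mul_rpow (by positivity) (by positivity)]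
        ring
  calc (#T : ℝ) ≤ #(T.image (gridIndex (2 ^ j))) *
        ((n + 2) ^ n * (2 * √n + 1) ^ s * M * (r / δ) ^ s / N + 2) :=
        card_le_card_image_mul _ hfib
    _ ≤ _ := by gcongr; exact_mod_cast hcells

theorem IsKatzTaoSet.exists_coloring [LinearOrder ι] (hA : IsKatzTaoSet δ s M A) (hδ : 0 < δ)
    (hδ1 : δ ≤ 1) (hM : 0 < M) (hs : 0 ≤ s) (hcube : ∀ x ∈ A, ∀ i, x i ∈ Set.Icc (0 : ℝ) 1) {τ : ℝ}
    (hτ : δ ≤ τ) (hlarge : ∀ r, τ < r → r ≤ 1 → 4 * 3 ^ Fintype.card ι ≤ (r / δ) ^ s) :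
    ∃ χ : EuclideanSpace ℝ ι → ℕ × ℕ,
      (∀ x ∈ A, χ x ∈ range ⌊(Fintype.card ι + 2) ^ Fintype.card ι * (2 * τ / δ) ^ s * M⌋₊ ×ˢ
        range ⌈2 * 3 ^ Fintype.card ι * ((Fintype.card ι + 2) ^ Fintype.card ι *
          (2 * √(Fintype.card ι) + 1) ^ s) * M⌉₊) ∧
      ∀ k, IsKatzTaoSet δ s 1 {x ∈ A | χ x = k} := by
  set n := Fintype.card ι
  set G : ℝ := (n + 2) ^ n
  set L : ℝ := G * (2 * √n + 1) ^ s
  set N₂ := ⌈2 * 3 ^ n * L * M⌉₊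
  have hN₂ : 0 < N₂ := Nat.ceil_pos.2 (by positivity)
  obtain ⟨χ₁, hχ₁, hχ₁ball⟩ := exists_coloring_card_filter_closedBall_le_one A
    (hδ.le.trans hτ) (N := ⌊G * (2 * τ / δ) ^ s * M⌋₊) fun x _ => Nat.le_floor <|
      (hA.card_filter_closedBall_le hδ hδ1 hM.le hs hcube x (by linarith)).trans_eq (by ring)
  refine ⟨fun x => (χ₁ x, rankIn A dyadicKey x % N₂), fun x hx =>
    mem_product.2 ⟨mem_range.2 (hχ₁ x hx), mem_range.2 (Nat.mod_lt _ hN₂)⟩, ?_⟩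
  rintro ⟨k, t⟩ c r hr hr1
  simp only [Prod.mk.injEq, one_mul]
  rcases le_or_gt r τ with hsmall | hbig
  · calc (#{x ∈ {x ∈ A | χ₁ x = k ∧ rankIn A dyadicKey x % N₂ = t} | x ∈ closedBall c r} : ℝ)
        ≤ #{x ∈ {x ∈ A | χ₁ x = k} | x ∈ closedBall c r} := by
          exact_mod_cast card_le_card <| filter_subset_filter _ <|
            monotone_filter_right A fun _ _ => And.left
      _ ≤ 1 := by exact_mod_cast hχ₁ball k c r hsmall
      _ ≤ (r / δ) ^ s := Real.one_le_rpow ((one_le_div hδ).2 hr) hs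
  · have hY := hlarge r hbig hr1
    have hY0 : 0 ≤ (r / δ) ^ s := Real.rpow_nonneg (div_nonneg (hδ.le.trans hr) hδ.le) s
    have hN₂M : L * M * (r / δ) ^ s / N₂ ≤ (r / δ) ^ s / (2 * 3 ^ n) := by
      rw [div_le_div_iff₀ (by positivity) (by positivity)]
      calc L * M * (r / δ) ^ s * (2 * 3 ^ n) = (r / δ) ^ s * (2 * 3 ^ n * L * M) := by ring
        _ ≤ (r / δ) ^ s * N₂ := mul_le_mul_of_nonneg_left (Nat.le_ceil _) hY0
    calc (#{x ∈ {x ∈ A | χ₁ x = k ∧ rankIn A dyadicKey x % N₂ = t} | x ∈ closedBall c r} : ℝ)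
        ≤ #{x ∈ {x ∈ A | rankIn A dyadicKey x % N₂ = t} | x ∈ closedBall c r} := by
          exact_mod_cast card_le_card <| filter_subset_filter _ <|
            monotone_filter_right A fun _ _ => And.right
      _ ≤ 3 ^ n * (L * M * (r / δ) ^ s / N₂ + 2) :=
          hA.card_filter_rankIn_mod_filter_closedBall_le hδ hδ1 hM.le hs hcube N₂ t c hr hr1
      _ ≤ 3 ^ n * ((r / δ) ^ s / (2 * 3 ^ n) + 2) := by gcongr
      _ = (r / δ) ^ s / 2 + 2 * 3 ^ n := by field_simp
      _ ≤ (r / δ) ^ s := by linarith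

theorem exists_katzTao_coloring [LinearOrder ι] (hs : 0 ≤ s) :
    ∃ C, 0 < C ∧ ∀ (A : Finset (EuclideanSpace ℝ ι)) (δ M : ℝ), 0 < δ → δ ≤ 1 → 1 ≤ M →
      (∀ x ∈ A, ∀ i, x i ∈ Set.Icc (0 : ℝ) 1) → IsKatzTaoSet δ s M A →
      ∃ (I : Finset (ℕ × ℕ)) (χ : EuclideanSpace ℝ ι → ℕ × ℕ), (#I : ℝ) ≤ C * M ^ C ∧
        (∀ x ∈ A, χ x ∈ I) ∧ ∀ k, IsKatzTaoSet δ s 1 {x ∈ A | χ x = k} := by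
  set n := Fintype.card ι
  set ρ : ℝ := (4 * 3 ^ n) ^ s⁻¹
  set a : ℝ := (n + 2) ^ n * (2 * ρ) ^ s
  set b : ℝ := 2 * 3 ^ n * ((n + 2) ^ n * (2 * √n + 1) ^ s)
  have ha : 0 ≤ a := by positivity
  have hb : 0 ≤ b := by positivity
  refine ⟨a * (b + 1) + 2, by positivity, fun A δ M hδ hδ1 hM hcube hA => ?_⟩
  -- For `s = 0` there are no large balls, and the greedy colouring with `τ = 1` does everything.
  obtain ⟨τ, hτ, hτρ, hlarge⟩ : ∃ τ, δ ≤ τ ∧ (2 * τ / δ) ^ s = (2 * ρ) ^ s ∧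
      ∀ r, τ < r → r ≤ 1 → 4 * 3 ^ n ≤ (r / δ) ^ s := by
    rcases hs.eq_or_lt with rfl | hs
    · exact ⟨1, hδ1, by simp, fun r h1 h2 => absurd h2 h1.not_ge⟩
    · have h3 : (1 : ℝ) ≤ 3 ^ n := one_le_pow₀ (by norm_num)
      have hρ : 1 ≤ ρ := Real.one_le_rpow (by linarith) (inv_nonneg.2 hs.le)
      refine ⟨ρ * δ, le_mul_of_one_le_left hδ.le hρ, by field_simp, fun r hr _ => ?_⟩
      calc (4 * 3 ^ n : ℝ) = ρ ^ s := (Real.rpow_inv_rpow (by positivity) hs.ne').symm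
        _ ≤ (r / δ) ^ s := Real.rpow_le_rpow (by positivity) ((le_div_iff₀ hδ).2 hr.le) hs.le
  obtain ⟨χ, hχ, hfib⟩ := hA.exists_coloring hδ hδ1 (by linarith) hs hcube hτ hlarge
  refine ⟨_, χ, ?_, hχ, hfib⟩
  rw [card_product, card_range, card_range, Nat.cast_mul, hτρ]
  exact floor_mul_mul_ceil_mul_le ha hb hM

end KatzTao

theorem stmt_6 (m : ℕ) (s : ℝ) (hs : 0 ≤ s) :
    ∃ C : ℝ, 0 < C ∧
      ∀ (A : Finset (EuclideanSpace ℝ (Fin m))) (δ M : ℝ),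
        0 < δ → δ ≤ 1 → 1 ≤ M →
        (∀ x ∈ A, ∀ i, x i ∈ Set.Icc (0 : ℝ) 1) →
        (∀ (c : EuclideanSpace ℝ (Fin m)) (r : ℝ), δ ≤ r → r ≤ 1 →
          (Set.ncard ((A : Set (EuclideanSpace ℝ (Fin m))) ∩ Metric.closedBall c r) : ℝ)
            ≤ M * (r / δ) ^ s) →
        ∃ P : Finset (Finset (EuclideanSpace ℝ (Fin m))),
          (P.card : ℝ) ≤ C * M ^ C ∧
          (∀ B ∈ P, B ⊆ A) ∧
          (∀ x ∈ A, ∃! B, B ∈ P ∧ x ∈ B) ∧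
          ∀ B ∈ P, ∀ (c : EuclideanSpace ℝ (Fin m)) (r : ℝ), δ ≤ r → r ≤ 1 →
            (Set.ncard ((B : Set (EuclideanSpace ℝ (Fin m))) ∩ Metric.closedBall c r) : ℝ)
              ≤ (r / δ) ^ s := by
  obtain ⟨C, hC, hcolor⟩ := exists_katzTao_coloring (ι := Fin m) hs
  refine ⟨C, hC, fun A δ M hδ hδ1 hM hcube hyp => ?_⟩
  have hA : IsKatzTaoSet δ s M A := fun c r hr hr1 => by
    simpa only [ncard_coe_inter] using hyp c r hr hr1
  obtain ⟨I, χ, hI, hχ, hfib⟩ := hcolor A δ M hδ hδ1 hM hcube hA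
  obtain ⟨P, hPI, hPA, hcover, hPfib⟩ := exists_partition_of_coloring A I χ hχ
  refine ⟨P, (Nat.cast_le.2 hPI).trans hI, hPA, hcover, fun B hB c r hr hr1 => ?_⟩
  obtain ⟨k, rfl⟩ := hPfib B hB
  simpa only [ncard_coe_inter, one_mul] using hfib k c r hr hr1
end

section
/- Let 0 ≤ l ≤ m ≤ n and identify an l-plane L ∈ A_loc(l,n) with the (l+1)-tuple (x_0,…,x_l), x_j = L ∩ Π_j, and an m-plane V ∈ A_loc(m,n) with the (l+1)-tuple (v_0,…,v_l) of parallel (m−l)-planes v_j = V ∩ Π_j. Then L ⊆ V if and only if x_j ∈ v_j for every j = 0,…,l. -/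
open Module

/-- The parallel affine planes `Π_j = Π_0 + e_{n-l+j}`, where `Π_0 = ℝ^{n-l} × {0}^l`. -/
def PiPlane (n l : ℕ) (j : Fin (l + 1)) : Set (Fin n → ℝ) :=
  {x | ∀ i : Fin n, n - l ≤ (i : ℕ) →
    x i = if (i : ℕ) + 1 = n - l + (j : ℕ) then 1 else 0}

/-!
An `l`-plane meeting `Π_0, …, Π_l` in `x_0, …, x_l` is the affine span of these points, since
they are affinely independent: on the last `l` coordinates `x_0` is `0` and `x_j` is the basis
vector `e_j`. Hence `L ⊆ V` as soon as every `x_j` lies in `V`.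
-/

theorem AffineIndependent.le_iff_forall_mem {k V P ι : Type*} [DivisionRing k] [AddCommGroup V]
    [Module k V] [AddTorsor V P] [Fintype ι] {p : ι → P} (hp : AffineIndependent k p)
    {L : AffineSubspace k P} [FiniteDimensional k L.direction] (hpL : ∀ i, p i ∈ L)
    (hcard : Fintype.card ι = finrank k L.direction + 1) (W : AffineSubspace k P) :
    L ≤ W ↔ ∀ i, p i ∈ W := by
  have hspan : affineSpan k (Set.range p) = L :=
    hp.affineSpan_eq_of_le_of_card_eq_finrank_add_one
      (affineSpan_le.2 (Set.range_subset_iff.2 hpL)) hcard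
  rw [← hspan, affineSpan_le, Set.range_subset_iff]
  rfl

namespace PiPlane

variable {n l : ℕ}

def lastCoords (hln : l ≤ n) : (Fin n → ℝ) →ₗ[ℝ] (Fin l → ℝ) :=
  LinearMap.funLeft ℝ ℝ fun k : Fin l => (⟨n - l + k, by omega⟩ : Fin n)

theorem lastCoords_eq_of_mem (hln : l ≤ n) {j : Fin (l + 1)} {x : Fin n → ℝ}
    (hx : x ∈ PiPlane n l j) (k : Fin l) :
    lastCoords hln x k = if (k : ℕ) + 1 = j then 1 else 0 := by
  simp only [lastCoords, LinearMap.funLeft_apply]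
  rw [hx _ (by simp)]
  congr 1
  simp only [eq_iff_iff]
  omega

theorem affineIndependent_of_mem (hln : l ≤ n) {x : Fin (l + 1) → Fin n → ℝ}
    (hx : ∀ j, x j ∈ PiPlane n l j) : AffineIndependent ℝ x := by
  rw [affineIndependent_iff_linearIndependent_vsub ℝ x 0]
  have hbasis : ∀ j : {j : Fin (l + 1) // j ≠ 0},
      lastCoords hln (x j -ᵥ x 0) = Pi.single ((j : Fin (l + 1)).pred j.2) 1 := by
    rintro ⟨j, hj⟩
    have hj' : (j : ℕ) ≠ 0 := Fin.val_ne_zero_iff.2 hj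
    ext k
    rw [vsub_eq_sub, map_sub, Pi.sub_apply, lastCoords_eq_of_mem hln (hx j),
      lastCoords_eq_of_mem hln (hx 0), Pi.single_apply]
    simp only [Fin.ext_iff, Fin.val_pred, Fin.val_zero, Nat.add_one_ne_zero, if_false, sub_zero]
    exact if_congr (by omega) rfl rfl
  apply LinearIndependent.of_comp (lastCoords hln)
  have hinj : Function.Injective fun j : {j : Fin (l + 1) // j ≠ 0} => (j : Fin (l + 1)).pred j.2 :=
    fun a b hab => Subtype.ext (Fin.pred_inj.1 hab)
  convert (Pi.basisFun ℝ (Fin l)).linearIndependent.comp _ hinj using 1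
  ext j : 1
  simpa using hbasis j

end PiPlane

theorem stmt_14_general (n l : ℕ) (hln : l < n)
    (L V : AffineSubspace ℝ (Fin n → ℝ))
    (hLdim : finrank ℝ L.direction = l)
    (x : Fin (l + 1) → Fin n → ℝ)
    (hxL : ∀ j, x j ∈ L) (hxP : ∀ j, x j ∈ PiPlane n l j)
    (v : Fin (l + 1) → Set (Fin n → ℝ))
    (hv : ∀ j, v j = (V : Set (Fin n → ℝ)) ∩ PiPlane n l j) :
    (L : Set (Fin n → ℝ)) ⊆ (V : Set (Fin n → ℝ)) ↔ ∀ j, x j ∈ v j := by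
  have hindep := PiPlane.affineIndependent_of_mem hln.le hxP
  rw [SetLike.coe_subset_coe, hindep.le_iff_forall_mem hxL (by simp [hLdim]) V]
  simp [hv, hxP]

theorem stmt_14 (n l m : ℕ) (hlm : l ≤ m) (hmn : m ≤ n) (hln : l < n)
    (L V : AffineSubspace ℝ (Fin n → ℝ))
    (hLdim : finrank ℝ L.direction = l)
    (hVdim : finrank ℝ V.direction = m)
    (x : Fin (l + 1) → Fin n → ℝ)
    (hxL : ∀ j, x j ∈ L) (hxP : ∀ j, x j ∈ PiPlane n l j)
    (v : Fin (l + 1) → Set (Fin n → ℝ))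
    (hv : ∀ j, v j = (V : Set (Fin n → ℝ)) ∩ PiPlane n l j) :
    (L : Set (Fin n → ℝ)) ⊆ (V : Set (Fin n → ℝ)) ↔ ∀ j, x j ∈ v j :=
  stmt_14_general n l hln L V hLdim x hxL hxP v hv
end

section
/- Let 0 ≤ l ≤ m ≤ n and let U_1, …, U_J ∈ G(m−l, n−l) be subspaces such that there is NO (d−l)-dimensional subspace Π of ℝ^{n−l} containing all of them (where J = d−m+2). Identify each U_j with Ũ_j = U_j × ⋯ × U_j ((l+1) times) inside ℝ^{(n−l)(l+1)}. Then there is no subspace Π' of ℝ^{(n−l)(l+1)} of dimension (d−l)(l+1)+l containing all of Ũ_1, …, Ũ_J. -/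
open Module

/-- Any subspace of a finite-dimensional space can be enlarged to any given
intermediate dimension. -/
lemma aux_exists_superset {V : Type*} [AddCommGroup V] [Module ℝ V]
    [FiniteDimensional ℝ V] (k : ℕ) (hk : k ≤ finrank ℝ V) :
    ∀ N : Submodule ℝ V, finrank ℝ N ≤ k →
      ∃ W : Submodule ℝ V, N ≤ W ∧ finrank ℝ W = k := by
  intro N hN
  obtain ⟨c, hc⟩ := Nat.exists_eq_add_of_le hN
  clear hN
  induction c generalizing N with
  | zero => exact ⟨N, le_rfl, by omega⟩
  | succ c ih =>
    have hlt : finrank ℝ N < finrank ℝ V := by omega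
    obtain ⟨v, hv⟩ := N.exists_of_finrank_lt hlt
    have hvN : v ∉ N := by simpa using hv 1 one_ne_zero
    have hv0 : v ≠ 0 := fun h => hvN (h ▸ N.zero_mem)
    set N' := N ⊔ Submodule.span ℝ {v} with hN'
    have hinf : N ⊓ Submodule.span ℝ {v} = ⊥ := by
      rw [eq_bot_iff]
      rintro x ⟨hxN, hxs⟩
      obtain ⟨a, rfl⟩ := Submodule.mem_span_singleton.mp hxs
      rcases eq_or_ne a 0 with rfl | ha
      · simpa using (by simp : (0:ℝ) • v = 0) ▸ Submodule.mem_bot ℝ |>.mpr rfl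
      · have hm := N.smul_mem a⁻¹ hxN
        rw [smul_smul, inv_mul_cancel₀ ha, one_smul] at hm
        exact absurd hm hvN
    have hrank : finrank ℝ N' = finrank ℝ N + 1 := by
      have := Submodule.finrank_sup_add_finrank_inf_eq N (Submodule.span ℝ {v})
      rw [← hN', hinf, finrank_bot, finrank_span_singleton hv0] at this
      omega
    obtain ⟨W, hW1, hW2⟩ := ih N' (by omega)
    exact ⟨W, le_trans le_sup_left hW1, hW2⟩

/-- `Submodule.pi Set.univ Q` is linearly equivalent to the product of the `Q i`. -/
noncomputable def auxPiEquiv {ι : Type*} [Fintype ι] [DecidableEq ι]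
    {V : ι → Type*} [∀ i, AddCommGroup (V i)] [∀ i, Module ℝ (V i)]
    (Q : ∀ i, Submodule ℝ (V i)) :
    (Submodule.pi Set.univ Q) ≃ₗ[ℝ] (∀ i, Q i) where
  toFun f := fun i => ⟨f.1 i, f.2 i (Set.mem_univ i)⟩
  map_add' f g := by ext i; rfl
  map_smul' a f := by ext i; rfl
  invFun g := ⟨fun i => (g i).1, fun i _ => (g i).2⟩
  left_inv f := by ext i; rfl
  right_inv g := by ext i; rfl

theorem stmt_19 (n l m d : ℕ) (hlm : l ≤ m) (hmd : m ≤ d) (hdn : d < n)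
    (U : Fin (d - m + 2) → Submodule ℝ (Fin (n - l) → ℝ))
    (hU : ∀ j, finrank ℝ (U j) = m - l)
    (hno : ¬ ∃ P : Submodule ℝ (Fin (n - l) → ℝ),
      finrank ℝ P = d - l ∧ ∀ j, U j ≤ P) :
    ¬ ∃ P' : Submodule ℝ (Fin (l + 1) → Fin (n - l) → ℝ),
      finrank ℝ P' = (d - l) * (l + 1) + l ∧
      ∀ j, Submodule.pi Set.univ (fun _ : Fin (l + 1) => U j) ≤ P' := by
  rintro ⟨P', hrank, hle⟩
  -- the slices of P'
  set Q : Fin (l + 1) → Submodule ℝ (Fin (n - l) → ℝ) := fun t =>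
    P'.comap (LinearMap.single ℝ (fun _ : Fin (l + 1) => Fin (n - l) → ℝ) t) with hQ
  -- each slice contains all the U j
  have hUQ : ∀ t j, U j ≤ Q t := by
    intro t j v hv
    simp only [hQ, Submodule.mem_comap]
    apply hle j
    intro i _
    rcases eq_or_ne i t with rfl | hne
    · simpa using hv
    · simp [LinearMap.single_apply, Pi.single_apply, hne.symm, (U j).zero_mem]
  -- each slice has dimension at least d - l + 1
  have hQrank : ∀ t, d - l + 1 ≤ finrank ℝ (Q t) := by
    intro t
    by_contra h
    push_neg at h
    have hamb : finrank ℝ (Fin (n - l) → ℝ) = n - l := by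
      simp [finrank_pi]
    obtain ⟨W, hW1, hW2⟩ := aux_exists_superset (d - l) (by omega) (Q t) (by omega)
    exact hno ⟨W, hW2, fun j => le_trans (hUQ t j) hW1⟩
  -- the product of the slices is inside P'
  have hpile : Submodule.pi Set.univ Q ≤ P' := by
    intro f hf
    have : f = ∑ t : Fin (l + 1), Pi.single t (f t) := by
      simp [Finset.univ_sum_single]
    rw [this]
    exact Submodule.sum_mem _ fun t _ => hf t (Set.mem_univ t)
  -- compute dimensions
  have hpi : finrank ℝ (Submodule.pi Set.univ Q) = ∑ t, finrank ℝ (Q t) := by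
    rw [LinearEquiv.finrank_eq (auxPiEquiv Q), finrank_pi_fintype]
  have hbound : ∑ t : Fin (l + 1), finrank ℝ (Q t) ≥ (l + 1) * (d - l + 1) := by
    calc ∑ t : Fin (l + 1), finrank ℝ (Q t)
        ≥ ∑ _t : Fin (l + 1), (d - l + 1) := Finset.sum_le_sum fun t _ => hQrank t
      _ = (l + 1) * (d - l + 1) := by simp [Finset.sum_const, mul_comm]
  have hmono := Submodule.finrank_mono hpile
  rw [hpi, hrank] at hmono
  have : (l + 1) * (d - l + 1) = (d - l) * (l + 1) + l + 1 := by ring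
  omega
end
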